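/- For uniform finite probability spaces U_n and U_m of cardinalities n and m: (1) k(U_n, U_m) ≤ 2 ln 2 + |ln(n/m)|; (2) the asymptotic Kolmogorov–Sinai distance satisfies ḱ(U_n, U_m) = |ln n − ln m| = |Ent(U_n) − Ent(U_m)|. -/

import Mathlib

open scoped Classical BigOperators
open Finset

noncomputable section

/-- A probability distribution on a finite set. -/
def IsDist {S : Type*} [Fintype S] (p : S → ℝ) : Prop :=
  (∀ x, 0 ≤ p x) ∧ ∑ x, p x = 1

/-- Shannon entropy (natural logarithm). -/
def ent {S : Type*} [Fintype S] (p : S → ℝ) : ℝ :=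
  -∑ x, p x * Real.log (p x)

/-- Relative entropy (Kullback–Leibler divergence). -/
def KL {S : Type*} [Fintype S] (p q : S → ℝ) : ℝ :=
  ∑ x, p x * Real.log (p x / q x)

/-- The n-fold product (Bernoulli) distribution. -/
def powDist {S : Type*} [Fintype S] (p : S → ℝ) (n : ℕ) : (Fin n → S) → ℝ :=
  fun f => ∏ i, p (f i)

/-- Tensor product of two distributions. -/
def prodDist {S T : Type*} [Fintype S] [Fintype T] (p : S → ℝ) (q : T → ℝ) :
    S × T → ℝ :=
  fun z => p z.1 * q z.2

/-- Empirical distribution of a sequence. -/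
def emp {S : Type*} [Fintype S] {n : ℕ} (f : Fin n → S) : S → ℝ :=
  fun a => ((univ.filter (fun i => f i = a)).card : ℝ) / n

/-- A coupling (joint distribution with given marginals). -/
def IsCoupling {S T : Type*} [Fintype S] [Fintype T]
    (w : S × T → ℝ) (p : S → ℝ) (q : T → ℝ) : Prop :=
  IsDist w ∧ (∀ x, ∑ y, w (x, y) = p x) ∧ (∀ y, ∑ x, w (x, y) = q y)

/-- The intrinsic Kolmogorov–Sinai distance. -/
def kdist {S T : Type*} [Fintype S] [Fintype T] (p : S → ℝ) (q : T → ℝ) : ℝ :=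
  sInf {d : ℝ | ∃ w : S × T → ℝ, IsCoupling w p q ∧ d = 2 * ent w - ent p - ent q}

end


/-!
Every coupling of `p` and `q` has entropy at least `max (ent p) (ent q)`, so
`k(p, q) ≥ |ent p - ent q|`, which is `|log n - log m|` for uniform distributions. Conversely,
overlaying the partitions of `[0, 1]` into `n` and `m` equal intervals gives a coupling of `U_n`
and `U_m` supported on at most `n + m` cells, so of entropy at most
`log (n + m) ≤ log 2 + log (max n m)`; this yields `k(U_n, U_m) ≤ 2 log 2 + |log n - log m|`.
Since `U_n^{⊗N} = U_{n^N}`, both bounds are `N |log n - log m|` up to the constant `2 log 2`,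
which disappears after dividing by `N`.
-/

open Real Filter Topology

section Entropy

variable {S T : Type*} [Fintype S] [Fintype T]

lemma ent_eq_sum_negMulLog (p : S → ℝ) : ent p = ∑ x, negMulLog (p x) := by
  simp only [ent, negMulLog_eq_neg, Finset.sum_neg_distrib]

lemma ent_comp_equiv (p : T → ℝ) (e : S ≃ T) : ent (p ∘ e) = ent p := by
  simp only [ent_eq_sum_negMulLog, Function.comp_apply, e.sum_comp (fun y => negMulLog (p y))]

lemma negMulLog_le_mul_log_add {p K : ℝ} (hp : 0 ≤ p) (hK : 0 < K) :
    negMulLog p ≤ p * log K + (1 / K - p) := by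
  have h := negMulLog_le_one_sub_self (mul_nonneg hK.le hp)
  rw [negMulLog_mul, negMulLog] at h
  have : K * negMulLog p ≤ K * (p * log K + (1 / K - p)) := by
    rw [mul_add, mul_sub, mul_one_div_cancel hK.ne']
    linarith
  exact le_of_mul_le_mul_left this hK

lemma ent_le_log_of_support_subset {p : S → ℝ} (hp : IsDist p) {A : Finset S}
    (hA : ∀ x ∉ A, p x = 0) {K : ℝ} (hK : A.card ≤ K) : ent p ≤ log K := by
  have hsum : ∑ x ∈ A, p x = 1 := by
    rw [← hp.2]
    exact Finset.sum_subset (Finset.subset_univ A) fun x _ hx => hA x hx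
  have hcard : (0 : ℝ) < A.card := by
    exact_mod_cast (Finset.nonempty_of_sum_ne_zero (hsum ▸ one_ne_zero)).card_pos
  calc ent p = ∑ x ∈ A, negMulLog (p x) := by
        rw [ent_eq_sum_negMulLog]
        exact (Finset.sum_subset (Finset.subset_univ A) fun x _ hx => by simp [hA x hx]).symm
    _ ≤ ∑ x ∈ A, (p x * log A.card + (1 / A.card - p x)) :=
        Finset.sum_le_sum fun x _ => negMulLog_le_mul_log_add (hp.1 x) hcard
    _ = log A.card := by
        rw [Finset.sum_add_distrib, ← Finset.sum_mul, Finset.sum_sub_distrib, hsum,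
          Finset.sum_const, nsmul_eq_mul, mul_one_div_cancel hcard.ne']
        ring
    _ ≤ log K := log_le_log hcard hK

namespace IsCoupling

variable {w : S × T → ℝ} {p : S → ℝ} {q : T → ℝ}

lemma swap (h : IsCoupling w p q) : IsCoupling (w ∘ Prod.swap) q p := by
  refine ⟨⟨fun z => h.1.1 _, ?_⟩, h.2.2, h.2.1⟩
  rw [← h.1.2, ← (Equiv.prodComm T S).sum_comp]
  rfl

lemma comp_equiv {S' T' : Type*} [Fintype S'] [Fintype T'] (h : IsCoupling w p q)
    (e : S' ≃ S) (f : T' ≃ T) : IsCoupling (w ∘ Prod.map e f) (p ∘ e) (q ∘ f) := by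
  refine ⟨⟨fun z => h.1.1 _, ?_⟩, fun x => ?_, fun y => ?_⟩
  · rw [← h.1.2, ← (e.prodCongr f).sum_comp]
    rfl
  · exact (f.sum_comp fun y => w (e x, y)).trans (h.2.1 (e x))
  · exact (e.sum_comp fun x => w (x, f y)).trans (h.2.2 (f y))

lemma ent_left_le (h : IsCoupling w p q) : ent p ≤ ent w := by
  have hw : ∀ x y, w (x, y) ≤ p x := fun x y => by
    rw [← h.2.1 x]
    exact Finset.single_le_sum (fun y' _ => h.1.1 (x, y')) (Finset.mem_univ y)
  calc ent p = ∑ x, ∑ y, -(w (x, y) * log (p x)) := by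
        simp only [ent, ← h.2.1, Finset.sum_mul, Finset.sum_neg_distrib]
    _ ≤ ∑ x, ∑ y, -(w (x, y) * log (w (x, y))) := by
        refine Finset.sum_le_sum fun x _ => Finset.sum_le_sum fun y _ => ?_
        rcases (h.1.1 (x, y)).eq_or_lt with h0 | hpos
        · simp [← h0]
        · exact neg_le_neg (mul_le_mul_of_nonneg_left (log_le_log hpos (hw x y)) hpos.le)
    _ = ent w := by simp only [ent, Fintype.sum_prod_type, Finset.sum_neg_distrib]

lemma ent_right_le (h : IsCoupling w p q) : ent q ≤ ent w := by
  simpa only [ent_comp_equiv] using h.swap.ent_left_le (w := w ∘ Equiv.prodComm T S)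

lemma abs_ent_sub_le (h : IsCoupling w p q) : |ent p - ent q| ≤ 2 * ent w - ent p - ent q := by
  have := h.ent_left_le
  have := h.ent_right_le
  rw [abs_sub_le_iff]
  constructor <;> linarith

end IsCoupling

lemma isCoupling_prodDist {p : S → ℝ} {q : T → ℝ} (hp : IsDist p) (hq : IsDist q) :
    IsCoupling (prodDist p q) p q := by
  refine ⟨⟨fun z => mul_nonneg (hp.1 _) (hq.1 _), ?_⟩, fun x => ?_, fun y => ?_⟩
  · simp only [Fintype.sum_prod_type, prodDist, ← Finset.mul_sum, hq.2, mul_one, hp.2]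
  · simp only [prodDist, ← Finset.mul_sum, hq.2, mul_one]
  · simp only [prodDist, ← Finset.sum_mul, hp.2, one_mul]

lemma abs_ent_sub_ent_le_kdist {p : S → ℝ} {q : T → ℝ} (hp : IsDist p) (hq : IsDist q) :
    |ent p - ent q| ≤ kdist p q := by
  refine le_csInf ⟨_, prodDist p q, isCoupling_prodDist hp hq, rfl⟩ ?_
  rintro d ⟨w, hw, rfl⟩
  exact hw.abs_ent_sub_le

lemma kdist_le_of_isCoupling {p : S → ℝ} {q : T → ℝ} {w : S × T → ℝ}
    (hw : IsCoupling w p q) :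
    kdist p q ≤ 2 * ent w - ent p - ent q := by
  refine csInf_le ⟨|ent p - ent q|, ?_⟩ ⟨w, hw, rfl⟩
  rintro d ⟨w', hw', rfl⟩
  exact hw'.abs_ent_sub_le

end Entropy

lemma max_zero_min_sub_max_eq {u v s t : ℝ} (huv : u ≤ v) (hst : s ≤ t) :
    max 0 (min v t - max u s) = max u (min v t) - max u (min v s) := by
  rcases le_total v t with h | h <;> rcases le_total u s with h' | h' <;>
    simp only [max_def, min_def] <;> split_ifs <;> linarith

lemma sum_overlap_uniform_partition (m : ℕ) (hm : 0 < m) {u v : ℝ} (hu : 0 ≤ u)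
    (huv : u ≤ v) (hv : v ≤ 1) :
    ∑ j : Fin m, max 0 (min v (((j : ℕ) + 1 : ℝ) / m) - max u ((j : ℕ) / m)) = v - u := by
  have hmR : (0 : ℝ) < m := by exact_mod_cast hm
  set F : ℕ → ℝ := fun j => max u (min v ((j : ℝ) / m))
  have hstep : ∀ j : ℕ, max 0 (min v (((j : ℝ) + 1) / m) - max u ((j : ℝ) / m))
      = F (j + 1) - F j := fun j => by
    rw [max_zero_min_sub_max_eq huv (by gcongr; linarith)]
    push_cast [F]
    rfl
  rw [Fin.sum_univ_eq_sum_range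
      (fun j => max 0 (min v (((j : ℝ) + 1) / m) - max u ((j : ℝ) / m))),
    Finset.sum_congr rfl fun j _ => hstep j, Finset.sum_range_sub]
  simp [F, div_self hmR.ne', hv, hu, huv]

lemma Nat.floor_mul_eq_of_div_le_of_lt_div {n i : ℕ} {c : ℝ} (hn : 0 < n) (h₁ : i / n ≤ c)
    (h₂ : c < (i + 1) / n) : ⌊c * n⌋₊ = i := by
  have hnR : (0 : ℝ) < n := by exact_mod_cast hn
  rw [div_le_iff₀ hnR] at h₁
  rw [lt_div_iff₀ hnR] at h₂
  exact (Nat.floor_eq_iff (by linarith [Nat.cast_nonneg (α := ℝ) i])).2 ⟨h₁, h₂⟩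

/-- The monotone coupling of the uniform distributions on `Fin n` and `Fin m`: the pair `(i, j)`
gets the length of `[i/n, (i+1)/n] ∩ [j/m, (j+1)/m]`. -/
noncomputable def stairCoupling (n m : ℕ) (z : Fin n × Fin m) : ℝ :=
  max 0 (min (((z.1 : ℕ) + 1 : ℝ) / n) (((z.2 : ℕ) + 1 : ℝ) / m)
    - max ((z.1 : ℕ) / n : ℝ) ((z.2 : ℕ) / m : ℝ))

namespace stairCoupling

variable {n m : ℕ}

lemma cell_bounds (i : Fin n) :
    0 ≤ ((i : ℕ) / n : ℝ) ∧ ((i : ℕ) / n : ℝ) ≤ ((i : ℕ) + 1 : ℝ) / n ∧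
      ((i : ℕ) + 1 : ℝ) / n ≤ 1 := by
  have hn : (0 : ℝ) < n := by exact_mod_cast i.pos
  have hi : ((i : ℕ) + 1 : ℝ) ≤ n := by exact_mod_cast i.isLt
  refine ⟨by positivity, by gcongr; linarith, ?_⟩
  rwa [div_le_one hn]

lemma sum_right (hm : 0 < m) (i : Fin n) : ∑ j : Fin m, stairCoupling n m (i, j) = 1 / n := by
  obtain ⟨h0, hle, h1⟩ := cell_bounds i
  rw [show (1 / n : ℝ) = ((i : ℕ) + 1) / n - (i : ℕ) / n by ring]
  exact sum_overlap_uniform_partition m hm h0 hle h1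

lemma sum_left (hn : 0 < n) (j : Fin m) : ∑ i : Fin n, stairCoupling n m (i, j) = 1 / m := by
  obtain ⟨h0, hle, h1⟩ := cell_bounds j
  simp only [stairCoupling, min_comm (((_ : ℕ) + 1 : ℝ) / n), max_comm ((_ : ℕ) / n : ℝ)]
  rw [show (1 / m : ℝ) = ((j : ℕ) + 1) / m - (j : ℕ) / m by ring]
  exact sum_overlap_uniform_partition n hn h0 hle h1

lemma isCoupling (hn : 0 < n) (hm : 0 < m) :
    IsCoupling (stairCoupling n m) (fun _ : Fin n => (1 : ℝ) / n)
      (fun _ : Fin m => (1 : ℝ) / m) := by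
  have hnR : (0 : ℝ) < n := by exact_mod_cast hn
  refine ⟨⟨fun z => le_max_left _ _, ?_⟩, sum_right hm, sum_left hn⟩
  rw [Fintype.sum_prod_type]
  simp only [sum_right hm, Finset.sum_const, Finset.card_univ, Fintype.card_fin, nsmul_eq_mul,
    mul_one_div_cancel hnR.ne']

/-- The cells `[i/n, (i+1)/n] ∩ [j/m, (j+1)/m]` of positive length are pairwise disjoint, so
their left endpoints are distinct breakpoints of the two partitions; there are at most `n + m`. -/
lemma card_support_le :
    (Finset.univ.filter fun z => stairCoupling n m z ≠ 0).card ≤ n + m := by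
  let left : Fin n × Fin m → ℝ := fun z => max ((z.1 : ℕ) / n : ℝ) ((z.2 : ℕ) / m : ℝ)
  let breakpoints : Finset ℝ := (Finset.univ.image fun i : Fin n => ((i : ℕ) / n : ℝ)) ∪
    Finset.univ.image fun j : Fin m => ((j : ℕ) / m : ℝ)
  have hleft : ∀ z, stairCoupling n m z ≠ 0 →
      left z < min (((z.1 : ℕ) + 1 : ℝ) / n) (((z.2 : ℕ) + 1 : ℝ) / m) := fun z hz => by
    by_contra h
    exact hz (max_eq_left (by linarith))
  have hcoords : ∀ z, stairCoupling n m z ≠ 0 →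
      ⌊left z * n⌋₊ = z.1 ∧ ⌊left z * m⌋₊ = z.2 := fun z hz =>
    ⟨Nat.floor_mul_eq_of_div_le_of_lt_div z.1.pos (le_max_left _ _)
      ((hleft z hz).trans_le (min_le_left _ _)),
    Nat.floor_mul_eq_of_div_le_of_lt_div z.2.pos (le_max_right _ _)
      ((hleft z hz).trans_le (min_le_right _ _))⟩
  calc (Finset.univ.filter fun z => stairCoupling n m z ≠ 0).card
      ≤ breakpoints.card := by
        refine Finset.card_le_card_of_injOn left (fun z _ => ?_) fun z hz z' hz' h => ?_
        · rcases max_choice ((z.1 : ℕ) / n : ℝ) ((z.2 : ℕ) / m : ℝ) with h | h <;>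
            simp [breakpoints, left, h]
        · obtain ⟨h₁, h₂⟩ := hcoords z (Finset.mem_filter.1 hz).2
          obtain ⟨h₁', h₂'⟩ := hcoords z' (Finset.mem_filter.1 hz').2
          rw [h] at h₁ h₂
          exact Prod.ext (Fin.ext (h₁.symm.trans h₁')) (Fin.ext (h₂.symm.trans h₂'))
    _ ≤ n + m := by
        refine (Finset.card_union_le _ _).trans (add_le_add ?_ ?_) <;>
          exact Finset.card_image_le.trans (by simp)

lemma ent_le_log (hn : 0 < n) (hm : 0 < m) : ent (stairCoupling n m) ≤ log (n + m) :=
  ent_le_log_of_support_subset (isCoupling hn hm).1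
    (A := Finset.univ.filter fun z => stairCoupling n m z ≠ 0) (fun z hz => by simpa using hz)
    (by exact_mod_cast card_support_le)

end stairCoupling

lemma two_log_add_sub_le {a b : ℝ} (ha : 0 < a) (hb : 0 < b) :
    2 * log (a + b) - log a - log b ≤ 2 * log 2 + |log a - log b| := by
  wlog hab : a ≤ b generalizing a b
  · have := this hb ha (le_of_not_ge hab)
    rw [add_comm, abs_sub_comm]
    linarith
  have hsum : log (a + b) ≤ log 2 + log b := by
    rw [← log_mul two_ne_zero hb.ne']
    exact log_le_log (by positivity) (by linarith)
  have hlog : log a ≤ log b := log_le_log ha hab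
  rw [abs_of_nonpos (by linarith)]
  linarith

section Uniform

variable (S T : Type*) [Fintype S] [Fintype T] [Nonempty S] [Nonempty T]

lemma isDist_uniform : IsDist fun _ : S => (1 : ℝ) / Fintype.card S := by
  refine ⟨fun _ => by positivity, ?_⟩
  rw [Finset.sum_const, Finset.card_univ, nsmul_eq_mul, mul_one_div_cancel (by positivity)]

lemma ent_uniform : ent (fun _ : S => (1 : ℝ) / Fintype.card S) = log (Fintype.card S) := by
  have : (0 : ℝ) < Fintype.card S := by exact_mod_cast Fintype.card_pos
  rw [ent, Finset.sum_const, Finset.card_univ, nsmul_eq_mul, one_div, log_inv]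
  field_simp

lemma abs_log_card_sub_le_kdist_uniform :
    |log (Fintype.card S) - log (Fintype.card T)|
      ≤ kdist (fun _ : S => (1 : ℝ) / Fintype.card S)
          (fun _ : T => (1 : ℝ) / Fintype.card T) := by
  simpa only [ent_uniform] using abs_ent_sub_ent_le_kdist (isDist_uniform S) (isDist_uniform T)

lemma kdist_uniform_le :
    kdist (fun _ : S => (1 : ℝ) / Fintype.card S) (fun _ : T => (1 : ℝ) / Fintype.card T)
      ≤ 2 * log 2 + |log (Fintype.card S) - log (Fintype.card T)| := by
  have hcoupling := (stairCoupling.isCoupling Fintype.card_pos Fintype.card_pos).comp_equiv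
    (Fintype.equivFin S) (Fintype.equivFin T)
  refine (kdist_le_of_isCoupling hcoupling).trans ?_
  have hent : ent (stairCoupling _ _ ∘ Prod.map (Fintype.equivFin S) (Fintype.equivFin T))
      = ent (stairCoupling (Fintype.card S) (Fintype.card T)) :=
    ent_comp_equiv _ ((Fintype.equivFin S).prodCongr (Fintype.equivFin T))
  have hS : ent ((fun _ => (1 : ℝ) / Fintype.card S) ∘ Fintype.equivFin S)
      = log (Fintype.card S) := ent_uniform S
  have hT : ent ((fun _ => (1 : ℝ) / Fintype.card T) ∘ Fintype.equivFin T)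
      = log (Fintype.card T) := ent_uniform T
  rw [hent, hS, hT]
  linarith [stairCoupling.ent_le_log (Fintype.card_pos (α := S)) (Fintype.card_pos (α := T)),
    two_log_add_sub_le (a := Fintype.card S) (b := Fintype.card T) (by positivity) (by positivity)]

end Uniform

lemma powDist_uniform (S : Type*) [Fintype S] (N : ℕ) :
    powDist (fun _ : S => (1 : ℝ) / Fintype.card S) N
      = fun _ => (1 : ℝ) / Fintype.card (Fin N → S) := by
  funext f
  simp [powDist]

lemma tendsto_div_of_mul_le_of_le_add {a : ℕ → ℝ} {L C : ℝ}
    (hlo : ∀ N : ℕ, N * L ≤ a N) (hhi : ∀ N : ℕ, a N ≤ C + N * L) :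
    Tendsto (fun N => a N / N) atTop (𝓝 L) := by
  have hC : Tendsto (fun N : ℕ => L + C / N) atTop (𝓝 L) := by
    simpa using tendsto_const_nhds.add (tendsto_const_div_atTop_nhds_zero_nat C)
  refine tendsto_of_tendsto_of_tendsto_of_le_of_le' tendsto_const_nhds hC ?_ ?_
  · filter_upwards [eventually_gt_atTop 0] with N hN
    rw [le_div_iff₀ (Nat.cast_pos.2 hN), mul_comm]
    exact hlo N
  · filter_upwards [eventually_gt_atTop 0] with N hN
    rw [div_le_iff₀ (Nat.cast_pos.2 hN), add_mul, div_mul_cancel₀ _ (Nat.cast_pos.2 hN).ne',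
      mul_comm L]
    linarith [hhi N]

lemma tendsto_kdist_powDist_uniform (S T : Type*) [Fintype S] [Fintype T] [Nonempty S]
    [Nonempty T] :
    Tendsto (fun N : ℕ => kdist (powDist (fun _ : S => (1 : ℝ) / Fintype.card S) N)
        (powDist (fun _ : T => (1 : ℝ) / Fintype.card T) N) / N)
      atTop (𝓝 |log (Fintype.card S) - log (Fintype.card T)|) := by
  have hlog : ∀ N : ℕ, |log (Fintype.card (Fin N → S)) - log (Fintype.card (Fin N → T))|
      = N * |log (Fintype.card S) - log (Fintype.card T)| := fun N => by
    simp only [Fintype.card_fun, Fintype.card_fin, Nat.cast_pow, log_pow, ← mul_sub, abs_mul,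
      Nat.abs_cast]
  refine tendsto_div_of_mul_le_of_le_add (C := 2 * log 2) (fun N => ?_) fun N => ?_ <;>
    rw [powDist_uniform, powDist_uniform, ← hlog]
  · exact abs_log_card_sub_le_kdist_uniform _ _
  · exact kdist_uniform_le _ _

theorem stmt17 (n m : ℕ) (hn : 0 < n) (hm : 0 < m) :
    kdist (fun _ : Fin n => (1 : ℝ) / n) (fun _ : Fin m => (1 : ℝ) / m)
        ≤ 2 * Real.log 2 + |Real.log ((n : ℝ) / m)| ∧
    Filter.Tendsto (fun N : ℕ =>
        kdist (powDist (fun _ : Fin n => (1 : ℝ) / n) N)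
              (powDist (fun _ : Fin m => (1 : ℝ) / m) N) / N)
      Filter.atTop (nhds |Real.log n - Real.log m|) ∧
    |Real.log n - Real.log m|
      = |ent (fun _ : Fin n => (1 : ℝ) / n) - ent (fun _ : Fin m => (1 : ℝ) / m)| := by
  have : Nonempty (Fin n) := ⟨⟨0, hn⟩⟩
  have : Nonempty (Fin m) := ⟨⟨0, hm⟩⟩
  refine ⟨?_, ?_, ?_⟩
  · rw [log_div (by positivity) (by positivity)]
    simpa only [Fintype.card_fin] using kdist_uniform_le (Fin n) (Fin m)
  · simpa only [Fintype.card_fin] using tendsto_kdist_powDist_uniform (Fin n) (Fin m)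
  · have hent := ent_uniform (Fin n)
    have hent' := ent_uniform (Fin m)
    simp only [Fintype.card_fin] at hent hent'
    rw [hent, hent']
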